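/- arXiv:1607.03688 — 2 statements merged into one kernel-verified Lean document; each statement's English description precedes it below -/
import Mathlib

section
/- Consider the algorithm A_{L,c} on n machines with true execution times t ∈ ℝ_{≥0}^n. At any pure Nash equilibrium t̂, if i is a machine making the minimum declaration t̂_min, then t̂_min = min(t_i, t̂_sec/c). -/
open Finset

/-- The minimum declaration among the `n` machines. -/
noncomputable def xmin {n : ℕ} (x : Fin n → ℝ) : ℝ := ⨅ i, x i

open scoped Classical in
/-- The set of machines making the minimum declaration. -/
noncomputable def Nmin {n : ℕ} (x : Fin n → ℝ) : Finset (Fin n) :=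
  Finset.univ.filter fun i => x i = xmin x

/-- The second smallest declaration: the minimum declaration among machines outside
`Nmin x` (equal to `xmin x` if all machines make the minimum declaration). -/
noncomputable def xsec {n : ℕ} (x : Fin n → ℝ) : ℝ :=
  if h : (Finset.univ \ Nmin x).Nonempty then (Finset.univ \ Nmin x).inf' h x
  else xmin x

open scoped Classical in
/-- The set of machines declaring the second smallest declaration. -/
noncomputable def Nsec {n : ℕ} (x : Fin n → ℝ) : Finset (Fin n) :=
  Finset.univ.filter fun i => x i = xsec x

/-- The probability with which the algorithm `A_{L,c}` assigns the single task to
machine `i`, given the declared execution times `x`. -/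
noncomputable def alloc {n : ℕ} (L c : ℝ) (x : Fin n → ℝ) (i : Fin n) : ℝ :=
  if xmin x = xsec x then 1 / n
  else if xsec x < c * xmin x then
    (if i ∈ Nmin x then (1 / L) / (Nmin x).card
     else if i ∈ Nsec x then (1 - 1 / L) / (Nsec x).card
     else 0)
  else
    (if i ∈ Nmin x then
      (1 - ∑ k ∈ Finset.univ \ Nmin x, xmin x / (L * x k)) / (Nmin x).card
     else xmin x / (L * x i))

/-- The expected cost of machine `i` (with true times `t`) at declarations `x`,
when machines are bound by their declarations. -/
noncomputable def cost {n : ℕ} (L c : ℝ) (t x : Fin n → ℝ) (i : Fin n) : ℝ :=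
  alloc L c x i * max (x i) (t i)

/-- `b` is a pure Nash equilibrium of `A_{L,c}` for true times `t`: no machine can
strictly decrease her expected cost by unilaterally changing her declaration to any
other nonnegative value. -/
def IsEquilibrium {n : ℕ} (L c : ℝ) (t b : Fin n → ℝ) : Prop :=
  ∀ i : Fin n, ∀ x : ℝ, 0 ≤ x →
    cost L c t b i ≤ cost L c t (Function.update b i x) i

section Helpers

variable {n : ℕ}

lemma xmin_le (x : Fin n → ℝ) (k : Fin n) : xmin x ≤ x k := by
  have : Nonempty (Fin n) := ⟨k⟩
  exact ciInf_le (Set.Finite.bddBelow (Set.finite_range x)) k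

lemma xmin_eq_of {x : Fin n → ℝ} {j : Fin n} (h : ∀ k, x j ≤ x k) : xmin x = x j :=
  have : Nonempty (Fin n) := ⟨j⟩
  le_antisymm (ciInf_le (Set.Finite.bddBelow (Set.finite_range x)) j) (le_ciInf h)

lemma mem_Nmin {x : Fin n → ℝ} {i : Fin n} : i ∈ Nmin x ↔ x i = xmin x := by
  simp [Nmin]

lemma mem_Nsec {x : Fin n → ℝ} {i : Fin n} : i ∈ Nsec x ↔ x i = xsec x := by
  simp [Nsec]

lemma exists_xmin (hn : 0 < n) (x : Fin n → ℝ) : ∃ j, x j = xmin x := by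
  have : Nonempty (Fin n) := ⟨⟨0, hn⟩⟩
  obtain ⟨j, hj⟩ := Finite.exists_min x
  exact ⟨j, (xmin_eq_of hj).symm⟩

lemma erase_univ_nonempty (hn : 2 ≤ n) (i : Fin n) : ((univ : Finset (Fin n)).erase i).Nonempty := by
  have : Nontrivial (Fin n) := Fin.nontrivial_iff_two_le.mpr hn
  obtain ⟨j, hj⟩ := exists_ne i
  exact ⟨j, by simp [hj]⟩

lemma xsec_eq_of_comp {x : Fin n → ℝ} (h : (univ \ Nmin x).Nonempty) :
    xsec x = (univ \ Nmin x).inf' h x := dif_pos h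

lemma xsec_le {x : Fin n → ℝ} {k : Fin n} (hk : k ∉ Nmin x) : xsec x ≤ x k := by
  have hne : (univ \ Nmin x).Nonempty := ⟨k, by simp [hk]⟩
  rw [xsec_eq_of_comp hne]
  exact Finset.inf'_le x (by simp [hk])

lemma xmin_lt_xsec {x : Fin n → ℝ} (h : (univ \ Nmin x).Nonempty) :
    xmin x < xsec x := by
  rw [xsec_eq_of_comp h]
  obtain ⟨j, hj, hje⟩ := Finset.exists_mem_eq_inf' h x
  rw [hje]
  rcases lt_or_eq_of_le (xmin_le x j) with h' | h'
  · exact h'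
  · exact absurd (mem_Nmin.mpr h'.symm) (by simpa using (Finset.mem_sdiff.mp hj).2)

lemma xsec_eq_xmin_of_comp {x : Fin n → ℝ} (h : ¬ (univ \ Nmin x).Nonempty) :
    xsec x = xmin x := dif_neg h

lemma xmin_nonneg (hn : 0 < n) {x : Fin n → ℝ} (hx : ∀ k, 0 ≤ x k) : 0 ≤ xmin x := by
  obtain ⟨j, hj⟩ := exists_xmin hn x
  rw [← hj]; exact hx j

end Helpers

section Scenario

variable {n : ℕ} {b : Fin n → ℝ} {i : Fin n} {x : ℝ}

lemma sdown_xmin (h : ∀ k, k ≠ i → x < b k) :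
    xmin (Function.update b i x) = x := by
  have h1 : ∀ k, Function.update b i x i ≤ Function.update b i x k := by
    intro k
    rcases eq_or_ne k i with rfl | hk
    · exact le_refl _
    · rw [Function.update_of_ne hk, Function.update_self]; exact (h k hk).le
  rw [xmin_eq_of h1, Function.update_self]

lemma sdown_Nmin (h : ∀ k, k ≠ i → x < b k) :
    Nmin (Function.update b i x) = {i} := by
  ext k
  rw [mem_Nmin, sdown_xmin h, Finset.mem_singleton]
  constructor
  · intro hk
    by_contra hki
    rw [Function.update_of_ne hki] at hk
    exact absurd hk (ne_of_gt (h k hki))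
  · rintro rfl; simp

lemma sdown_comp (h : ∀ k, k ≠ i → x < b k) :
    univ \ Nmin (Function.update b i x) = univ.erase i := by
  rw [sdown_Nmin h]; ext k; simp [Finset.mem_erase, and_comm]

lemma sdown_xsec (hn : 2 ≤ n) (h : ∀ k, k ≠ i → x < b k) :
    xsec (Function.update b i x) = (univ.erase i).inf' (erase_univ_nonempty hn i) b := by
  have hset := sdown_comp h
  have hne : (univ \ Nmin (Function.update b i x)).Nonempty := by
    rw [hset]; exact erase_univ_nonempty hn i
  rw [xsec_eq_of_comp hne]
  have := Finset.inf'_congr hne hset (f := Function.update b i x) (g := b)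
    (fun k hk => Function.update_of_ne (by rw [hset] at hk; exact (Finset.mem_erase.mp hk).1) x b)
  rw [this]

lemma sdown_x_lt (hn : 2 ≤ n) (h : ∀ k, k ≠ i → x < b k) :
    x < (univ.erase i).inf' (erase_univ_nonempty hn i) b := by
  obtain ⟨j, hj, hje⟩ := Finset.exists_mem_eq_inf' (erase_univ_nonempty hn i) b
  rw [hje]
  exact h j (Finset.mem_erase.mp hj).1

lemma sdown_alloc2 (hn : 2 ≤ n) {L c : ℝ} (h : ∀ k, k ≠ i → x < b k)
    (hc2 : (univ.erase i).inf' (erase_univ_nonempty hn i) b < c * x) :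
    alloc L c (Function.update b i x) i = 1 / L := by
  rw [alloc, sdown_xmin h, sdown_xsec hn h, sdown_Nmin h,
    if_neg (ne_of_lt (sdown_x_lt hn h)), if_pos hc2, if_pos (Finset.mem_singleton_self i)]
  simp

lemma sdown_alloc3 (hn : 2 ≤ n) {L c : ℝ} (h : ∀ k, k ≠ i → x < b k)
    (hc3 : c * x ≤ (univ.erase i).inf' (erase_univ_nonempty hn i) b) :
    alloc L c (Function.update b i x) i
      = 1 - ∑ k ∈ univ.erase i, x / (L * b k) := by
  rw [alloc, sdown_xmin h, sdown_xsec hn h, sdown_Nmin h,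
    if_neg (ne_of_lt (sdown_x_lt hn h)), if_neg (not_lt.mpr hc3),
    if_pos (Finset.mem_singleton_self i)]
  rw [show (univ \ ({i} : Finset (Fin n))) = univ.erase i by
    ext k; simp [Finset.mem_erase, and_comm]]
  rw [Finset.sum_congr rfl (fun k hk => by
    rw [Function.update_of_ne (Finset.mem_erase.mp hk).1])]
  simp

end Scenario

section Big

variable {n : ℕ} {b : Fin n → ℝ} {i : Fin n} {x : ℝ}

lemma sbig_alloc (hn : 2 ≤ n) {L c : ℝ} (hL : 0 < L) (hb : ∀ k, 0 ≤ b k)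
    (h : ∀ k, k ≠ i → b k < x)
    (hx : c * ((univ.erase i).inf' (erase_univ_nonempty hn i) b) ≤ x) :
    alloc L c (Function.update b i x) i ≤
      (univ.erase i).inf' (erase_univ_nonempty hn i) b / (L * x) := by
  set M := (univ.erase i).inf' (erase_univ_nonempty hn i) b with hMdef
  obtain ⟨j, hj, hje⟩ := Finset.exists_mem_eq_inf' (erase_univ_nonempty hn i) b
  have hji : j ≠ i := (Finset.mem_erase.mp hj).1
  have hbj : M = b j := hMdef.trans hje
  have hM0 : 0 ≤ M := by rw [hbj]; exact hb j
  have hMx : M < x := by rw [hbj]; exact h j hji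
  have hx0 : 0 < x := lt_of_le_of_lt hM0 hMx
  set d := Function.update b i x with hd
  have hdk : ∀ k, k ≠ i → d k = b k := fun k hk => Function.update_of_ne hk x b
  have hdi : d i = x := Function.update_self i x b
  have hxmin : xmin d = M := by
    have hmin : ∀ k, d j ≤ d k := by
      intro k
      rcases eq_or_ne k i with rfl | hk
      · rw [hdi, hdk j hji]; exact (h j hji).le
      · rw [hdk j hji, hdk k hk, ← hbj, hMdef]
        exact Finset.inf'_le b (Finset.mem_erase.mpr ⟨hk, Finset.mem_univ k⟩)
    rw [xmin_eq_of hmin, hdk j hji]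
    exact hbj.symm
  have hiNmin : i ∉ Nmin d := by
    rw [mem_Nmin, hxmin, hdi]
    exact ne_of_gt hMx
  have hne : (univ \ Nmin d).Nonempty := ⟨i, Finset.mem_sdiff.mpr ⟨Finset.mem_univ i, hiNmin⟩⟩
  have hlt : xmin d < xsec d := xmin_lt_xsec hne
  rw [alloc, if_neg (ne_of_lt hlt)]
  by_cases hcase : xsec d < c * xmin d
  · rw [if_pos hcase, if_neg hiNmin, if_neg ?notsec]
    case notsec =>
      rw [mem_Nsec, hdi]
      rw [hxmin] at hcase
      intro e
      rw [← e] at hcase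
      exact absurd hx (not_le.mpr hcase)
    exact div_nonneg hM0 (by positivity)
  · rw [if_neg hcase, if_neg hiNmin, hxmin, hdi]

end Big

lemma key_cost_le {n : ℕ} (hn : 2 ≤ n) {L c : ℝ} (hL : 2*((n:ℝ)-1) < L) (hc : 1 < c)
    {t b : Fin n → ℝ} (ht : ∀ k, 0 ≤ t k) (hb : ∀ k, 0 ≤ b k)
    (heq : IsEquilibrium L c t b) (j : Fin n) :
    cost L c t b j ≤ (univ.erase j).inf' (erase_univ_nonempty hn j) b / L := by
  have hn2 : (2:ℝ) ≤ (n:ℝ) := by exact_mod_cast hn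
  have hL0 : 0 < L := by nlinarith
  have hc0 : 0 < c := lt_trans one_pos hc
  set M := (univ.erase j).inf' (erase_univ_nonempty hn j) b with hMdef
  obtain ⟨j', hj', hje⟩ := Finset.exists_mem_eq_inf' (erase_univ_nonempty hn j) b
  have hbj' : M = b j' := hMdef.trans hje
  have hM0 : 0 ≤ M := by rw [hbj']; exact hb j'
  set A := max (max (c*M) (t j)) ((univ.erase j).sup' (erase_univ_nonempty hn j) b) with hA
  set x := A + 1 with hx
  have hA0 : 0 ≤ A := le_trans (mul_nonneg hc0.le hM0) (le_trans (le_max_left _ _) (le_max_left _ _))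
  have hx0 : 0 < x := by positivity
  have hcMx : c * M ≤ x := le_trans (le_trans (le_max_left _ _) (le_max_left _ _)) (by linarith)
  have htjx : t j ≤ x := le_trans (le_trans (le_max_right _ _) (le_max_left _ _)) (by linarith)
  have hbig : ∀ k, k ≠ j → b k < x := by
    intro k hk
    have : b k ≤ A := le_trans (Finset.le_sup' b (Finset.mem_erase.mpr ⟨hk, Finset.mem_univ k⟩))
      (le_max_right _ _)
    linarith
  have halo : alloc L c (Function.update b j x) j ≤ M / (L * x) := by
    rw [hMdef]; exact sbig_alloc hn hL0 hb hbig hcMx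
  have hcost := heq j x hx0.le
  have hcost2 : cost L c t (Function.update b j x) j
      = alloc L c (Function.update b j x) j * x := by
    simp only [cost, Function.update_self, max_eq_left htjx]
  rw [hcost2] at hcost
  calc cost L c t b j ≤ alloc L c (Function.update b j x) j * x := hcost
    _ ≤ (M / (L * x)) * x := mul_le_mul_of_nonneg_right halo hx0.le
    _ = M / L := by rw [div_mul_eq_mul_div, mul_div_mul_right M L (ne_of_gt hx0)]


set_option maxHeartbeats 3200000 in
/-- At any pure Nash equilibrium `b` of `A_{L,c}` on `n ≥ 2` machines, if `i` is a
machine making the minimum declaration, then `xmin b = min (t i) (xsec b / c)`. -/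
theorem claim_min_bid_value
    {n : ℕ} (hn : 2 ≤ n) (L c : ℝ)
    (hL : 2 * ((n : ℝ) - 1) < L) (hc : 1 < c)
    (t b : Fin n → ℝ)
    (ht : ∀ i, 0 ≤ t i) (hb : ∀ i, 0 ≤ b i)
    (heq : IsEquilibrium L c t b) :
    ∀ i : Fin n, i ∈ Nmin b → xmin b = min (t i) (xsec b / c) := by
  intro i hi
  have hn0 : 0 < n := by omega
  have hn2 : (2:ℝ) ≤ (n:ℝ) := by exact_mod_cast hn
  have hL0 : 0 < L := by nlinarith
  have hc0 : 0 < c := lt_trans one_pos hc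
  have hbi : b i = xmin b := mem_Nmin.mp hi
  have hm0 : 0 ≤ xmin b := xmin_nonneg hn0 hb
  by_cases hcomp : (univ \ Nmin b).Nonempty
  swap
  · -- Regime I : all machines bid the minimum
    have hall : ∀ k, b k = xmin b := by
      intro k
      by_contra hk
      exact hcomp ⟨k, Finset.mem_sdiff.mpr ⟨Finset.mem_univ k,
        fun h' => hk (mem_Nmin.mp h')⟩⟩
    have hsec : xsec b = xmin b := xsec_eq_xmin_of_comp hcomp
    have halloc : alloc L c b i = 1/(n:ℝ) := by rw [alloc, if_pos hsec.symm]
    have hkey := key_cost_le hn hL hc ht hb heq i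
    have hMi : (univ.erase i).inf' (erase_univ_nonempty hn i) b = xmin b := by
      obtain ⟨j, hj, hje⟩ := Finset.exists_mem_eq_inf' (erase_univ_nonempty hn i) b
      rw [hje, hall j]
    rw [cost, halloc, hMi] at hkey
    have h1 : xmin b ≤ max (b i) (t i) := le_trans (le_of_eq hbi.symm) (le_max_left _ _)
    have hkey2 : 1/(n:ℝ) * xmin b ≤ xmin b / L :=
      le_trans (by
        apply mul_le_mul_of_nonneg_left h1
        positivity) hkey
    have hmz : xmin b = 0 := by
      by_contra hne
      have hmpos : 0 < xmin b := lt_of_le_of_ne hm0 (Ne.symm hne)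
      rw [one_div_mul_eq_div, div_le_div_iff₀ (by positivity) hL0] at hkey2
      nlinarith
    rw [hmz, hsec, hmz, zero_div]
    exact (min_eq_right (ht i)).symm
  · -- complement nonempty
    have hms : xmin b < xsec b := xmin_lt_xsec hcomp
    by_cases hreg : xsec b < c * xmin b
    · -- Regime II : impossible
      exfalso
      have hmpos : 0 < xmin b := by nlinarith
      obtain ⟨j, hjc, hje⟩ := Finset.exists_mem_eq_inf' hcomp b
      have hbj : b j = xsec b := by rw [xsec_eq_of_comp hcomp, hje]
      have hjN : j ∉ Nmin b := (Finset.mem_sdiff.mp hjc).2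
      have hji : j ≠ i := fun e => hjN (e ▸ hi)
      have hjsec : j ∈ Nsec b := mem_Nsec.mpr hbj
      have halloc : alloc L c b j = (1 - 1/L) / ((Nsec b).card : ℝ) := by
        rw [alloc, if_neg (ne_of_lt hms), if_pos hreg, if_neg hjN, if_pos hjsec]
      have hMj : (univ.erase j).inf' (erase_univ_nonempty hn j) b = xmin b := by
        apply le_antisymm
        · exact le_trans (Finset.inf'_le b (Finset.mem_erase.mpr ⟨hji.symm, Finset.mem_univ i⟩))
            (le_of_eq hbi)
        · exact Finset.le_inf' _ _ (fun k _ => xmin_le b k)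
      have hkey := key_cost_le hn hL hc ht hb heq j
      rw [cost, halloc, hMj] at hkey
      have hn₂pos : 0 < ((Nsec b).card : ℝ) := by
        have : 0 < (Nsec b).card := Finset.card_pos.mpr ⟨j, hjsec⟩
        exact_mod_cast this
      have hn₂le : ((Nsec b).card : ℝ) ≤ (n:ℝ) - 1 := by
        have hsub : Nsec b ⊆ univ.erase i := by
          intro k hk
          refine Finset.mem_erase.mpr ⟨?_, Finset.mem_univ k⟩
          intro e
          have : b k = xsec b := mem_Nsec.mp hk
          rw [e, hbi] at this
          exact absurd this (ne_of_lt hms)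
        have := Finset.card_le_card hsub
        rw [Finset.card_erase_of_mem (Finset.mem_univ i), Finset.card_univ, Fintype.card_fin] at this
        have h2 : ((Nsec b).card : ℝ) ≤ ((n - 1 : ℕ) : ℝ) := by exact_mod_cast this
        rwa [Nat.cast_sub (by omega), Nat.cast_one] at h2
      have hsle : (1 - 1/L) / ((Nsec b).card : ℝ) * xsec b ≤ xmin b / L := by
        refine le_trans ?_ hkey
        apply mul_le_mul_of_nonneg_left
        · exact le_trans (le_of_eq hbj.symm) (le_max_left _ _)
        · have h1L : 1/L < 1 := by rw [div_lt_one hL0]; nlinarith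
          exact div_nonneg (by linarith) hn₂pos.le
      rw [div_mul_eq_mul_div, div_le_div_iff₀ hn₂pos hL0] at hsle
      -- hsle : (1 - 1/L) * xsec b * L ≤ xmin b * (Nsec b).card
      have hLL : (1 - 1/L) * L = L - 1 := by field_simp
      have hspos : 0 < xsec b := lt_trans hmpos hms
      nlinarith [mul_pos (show (0:ℝ) < L - 1 by nlinarith) (show (0:ℝ) < xsec b - xmin b by linarith)]
    · -- Regime III
      have hcm : c * xmin b ≤ xsec b := not_lt.mp hreg
      have hmsc : xmin b ≤ xsec b / c := by
        rw [le_div_iff₀ hc0]; linarith [mul_comm (xmin b) c]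
      have halloc : alloc L c b i =
          (1 - ∑ k ∈ univ \ Nmin b, xmin b / (L * b k)) / ((Nmin b).card : ℝ) := by
        rw [alloc, if_neg (ne_of_lt hms), if_neg hreg, if_pos hi]
      have hS0 : 0 ≤ ∑ k ∈ univ \ Nmin b, xmin b / (L * b k) :=
        Finset.sum_nonneg fun k _ => div_nonneg hm0 (mul_nonneg hL0.le (hb k))
      have hS0le : ∑ k ∈ univ \ Nmin b, xmin b / (L * b k) ≤ ((n:ℝ)-1) / L := by
        have hterm : ∀ k ∈ univ \ Nmin b, xmin b / (L * b k) ≤ 1/L := by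
          intro k _
          have hbk : xmin b ≤ b k := xmin_le b k
          rcases eq_or_lt_of_le (hb k) with hz | hz
          · have hmz : xmin b = 0 := le_antisymm (by rw [hz]; exact hbk) hm0
            rw [hmz, zero_div]
            positivity
          · rw [div_le_div_iff₀ (by positivity) hL0]
            nlinarith
        calc (∑ k ∈ univ \ Nmin b, xmin b / (L * b k))
            ≤ (univ \ Nmin b).card • ((1:ℝ)/L) := Finset.sum_le_card_nsmul _ _ _ hterm
          _ = ((univ \ Nmin b).card : ℝ) * (1/L) := nsmul_eq_mul _ _
          _ ≤ ((n:ℝ)-1) * (1/L) := by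
              apply mul_le_mul_of_nonneg_right _ (by positivity)
              have hsub : univ \ Nmin b ⊆ univ.erase i := fun k hk =>
                Finset.mem_erase.mpr ⟨fun e => (Finset.mem_sdiff.mp hk).2 (e ▸ hi),
                  Finset.mem_univ k⟩
              have h1 := Finset.card_le_card hsub
              rw [Finset.card_erase_of_mem (Finset.mem_univ i), Finset.card_univ,
                Fintype.card_fin] at h1
              have h2 : (((univ \ Nmin b).card) : ℝ) ≤ ((n-1:ℕ):ℝ) := by exact_mod_cast h1
              rwa [Nat.cast_sub (by omega), Nat.cast_one] at h2
          _ = ((n:ℝ)-1)/L := by ring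
      have hS0half : ∑ k ∈ univ \ Nmin b, xmin b / (L * b k) < 1/2 :=
        lt_of_le_of_lt hS0le ((div_lt_iff₀ hL0).mpr (by linarith))
      have hn₁pos : 0 < ((Nmin b).card : ℝ) := by
        have : 0 < (Nmin b).card := Finset.card_pos.mpr ⟨i, hi⟩
        exact_mod_cast this
      have hn₁le : ((Nmin b).card : ℝ) ≤ (n:ℝ) - 1 := by
        obtain ⟨j₀, hj₀⟩ := hcomp
        have hsub : Nmin b ⊆ univ.erase j₀ := fun k hk =>
          Finset.mem_erase.mpr ⟨fun e => (Finset.mem_sdiff.mp hj₀).2 (e ▸ hk),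
            Finset.mem_univ k⟩
        have h1 := Finset.card_le_card hsub
        rw [Finset.card_erase_of_mem (Finset.mem_univ j₀), Finset.card_univ,
          Fintype.card_fin] at h1
        have h2 : (((Nmin b).card) : ℝ) ≤ ((n-1:ℕ):ℝ) := by exact_mod_cast h1
        rwa [Nat.cast_sub (by omega), Nat.cast_one] at h2
      have hcost_cur : cost L c t b i =
          (1 - ∑ k ∈ univ \ Nmin b, xmin b / (L * b k)) / ((Nmin b).card : ℝ)
            * max (xmin b) (t i) := by
        rw [cost, halloc, hbi]
      -- Part (a): xmin b ≤ t i
      have hmt : xmin b ≤ t i := by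
        by_contra h'
        push_neg at h'
        have hmpos : 0 < xmin b := lt_of_le_of_lt (ht i) h'
        by_cases hcard : 1 < (Nmin b).card
        · -- at least two minimum bidders
          obtain ⟨k₀, hk₀N, hk₀i⟩ := Finset.exists_mem_ne hcard i
          have hMi : (univ.erase i).inf' (erase_univ_nonempty hn i) b = xmin b := by
            apply le_antisymm
            · exact le_trans (Finset.inf'_le b
                (Finset.mem_erase.mpr ⟨hk₀i, Finset.mem_univ k₀⟩))
                (le_of_eq (mem_Nmin.mp hk₀N))
            · exact Finset.le_inf' _ _ fun k _ => xmin_le b k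
          obtain ⟨x, hx_ge_t, hx_lt, hmcx⟩ :
              ∃ x, t i ≤ x ∧ x < xmin b ∧ xmin b < c * x := by
            refine ⟨(max (t i) (xmin b / c) + xmin b)/2, ?_, ?_, ?_⟩
            · have h1 : t i ≤ max (t i) (xmin b / c) := le_max_left _ _
              have h2 : xmin b / c < xmin b := by
                rw [div_lt_iff₀ hc0]; nlinarith
              have h3 : max (t i) (xmin b / c) < xmin b := max_lt h' h2
              linarith
            · have h2 : xmin b / c < xmin b := by
                rw [div_lt_iff₀ hc0]; nlinarith
              have h3 : max (t i) (xmin b / c) < xmin b := max_lt h' h2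
              linarith
            · have h1 : xmin b / c ≤ max (t i) (xmin b / c) := le_max_right _ _
              have h2 : xmin b / c < xmin b := by
                rw [div_lt_iff₀ hc0]; nlinarith
              have h4 : xmin b / c < (max (t i) (xmin b / c) + xmin b)/2 := by linarith
              rw [div_lt_iff₀ hc0] at h4
              linarith [mul_comm ((max (t i) (xmin b / c) + xmin b)/2) c]
          have hx0' : 0 ≤ x := le_trans (ht i) hx_ge_t
          have hdown : ∀ k, k ≠ i → x < b k :=
            fun k _ => lt_of_lt_of_le hx_lt (xmin_le b k)
          have hc2 : (univ.erase i).inf' (erase_univ_nonempty hn i) b < c * x := by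
            rw [hMi]; exact hmcx
          have hdev := heq i x hx0'
          have hcost_dev : cost L c t (Function.update b i x) i = 1/L * x := by
            rw [cost, sdown_alloc2 hn hdown hc2, Function.update_self,
              max_eq_left hx_ge_t]
          rw [hcost_cur, hcost_dev, max_eq_left h'.le, one_div_mul_eq_div,
            div_mul_eq_mul_div, div_le_div_iff₀ hn₁pos hL0] at hdev
          nlinarith [mul_pos (sub_pos.mpr hx_lt) hn₁pos,
            mul_nonneg (mul_nonneg
              (show (0:ℝ) ≤ 1/2 - ∑ k ∈ univ \ Nmin b, xmin b / (L * b k) by linarith)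
              hmpos.le) hL0.le,
            mul_pos hmpos (show (0:ℝ) < L - 2*((n:ℝ)-1) by linarith),
            mul_nonneg (show (0:ℝ) ≤ (n:ℝ)-1-((Nmin b).card:ℝ) by linarith) hmpos.le]
        · -- unique minimum bidder
          have hone : (Nmin b).card = 1 :=
            le_antisymm (not_lt.mp hcard) (Finset.card_pos.mpr ⟨i, hi⟩)
          obtain ⟨a, ha⟩ := Finset.card_eq_one.mp hone
          have hNi : Nmin b = {i} := by
            have hia := hi
            rw [ha, Finset.mem_singleton] at hia
            rw [ha, hia]
          have hset : univ \ Nmin b = univ.erase i := by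
            rw [hNi]; ext k; simp [Finset.mem_erase, and_comm]
          have hsum_m : ∑ k ∈ univ \ Nmin b, xmin b / (L * b k)
              = xmin b * ∑ k ∈ univ.erase i, 1/(L * b k) := by
            rw [hset, Finset.mul_sum]
            exact Finset.sum_congr rfl fun k _ => (mul_one_div _ _).symm
          have hsM : xsec b ≤ (univ.erase i).inf' (erase_univ_nonempty hn i) b := by
            apply Finset.le_inf'
            intro k hk
            apply xsec_le
            rw [hNi, Finset.mem_singleton]
            exact (Finset.mem_erase.mp hk).1
          obtain ⟨x, hx_ge_t, hx_lt⟩ : ∃ x, t i ≤ x ∧ x < xmin b :=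
            ⟨(t i + xmin b)/2, by linarith, by linarith⟩
          have hx0' : 0 ≤ x := le_trans (ht i) hx_ge_t
          have hdown : ∀ k, k ≠ i → x < b k :=
            fun k _ => lt_of_lt_of_le hx_lt (xmin_le b k)
          have hc3 : c * x
              ≤ (univ.erase i).inf' (erase_univ_nonempty hn i) b := by
            refine le_trans (le_trans ?_ hcm) hsM
            nlinarith
          have hdev := heq i x hx0'
          have hsum_x : ∑ k ∈ univ.erase i, x / (L * b k)
              = x * ∑ k ∈ univ.erase i, 1/(L * b k) := by
            rw [Finset.mul_sum]
            exact Finset.sum_congr rfl fun k _ => (mul_one_div _ _).symm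
          have hcost_dev : cost L c t (Function.update b i x) i
              = (1 - x * ∑ k ∈ univ.erase i, 1/(L * b k)) * x := by
            rw [cost, sdown_alloc3 hn hdown hc3, Function.update_self,
              max_eq_left hx_ge_t, hsum_x]
          rw [hcost_cur, hcost_dev, max_eq_left h'.le, hsum_m, hone,
            Nat.cast_one, div_one] at hdev
          have hσ0 : 0 ≤ ∑ k ∈ univ.erase i, 1/(L * b k) :=
            Finset.sum_nonneg fun k _ => one_div_nonneg.mpr (mul_nonneg hL0.le (hb k))
          rw [hsum_m] at hS0half
          nlinarith [mul_pos (sub_pos.mpr hx_lt)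
              (show (0:ℝ) < 1 - 2*(xmin b * ∑ k ∈ univ.erase i, 1/(L * b k)) by linarith),
            mul_nonneg (mul_nonneg hσ0 (sub_nonneg.mpr hx_lt.le)) (sub_nonneg.mpr hx_lt.le)]
      -- Part (b): xmin b ≥ min (t i) (xsec b / c)
      refine le_antisymm (le_min hmt hmsc) ?_
      by_contra h'
      push_neg at h'
      have hmt' : xmin b < t i := lt_of_lt_of_le h' (min_le_left _ _)
      have hmsc' : xmin b < xsec b / c := lt_of_lt_of_le h' (min_le_right _ _)
      have htpos : 0 < t i := lt_of_le_of_lt hm0 hmt'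
      by_cases hcard : 1 < (Nmin b).card
      · -- at least two minimum bidders: use the big-bid bound
        obtain ⟨k₀, hk₀N, hk₀i⟩ := Finset.exists_mem_ne hcard i
        have hMi : (univ.erase i).inf' (erase_univ_nonempty hn i) b = xmin b := by
          apply le_antisymm
          · exact le_trans (Finset.inf'_le b
              (Finset.mem_erase.mpr ⟨hk₀i, Finset.mem_univ k₀⟩))
              (le_of_eq (mem_Nmin.mp hk₀N))
          · exact Finset.le_inf' _ _ fun k _ => xmin_le b k
        have hkey := key_cost_le hn hL hc ht hb heq i
        rw [cost, halloc, hbi, hMi, max_eq_right hmt'.le, div_mul_eq_mul_div,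
          div_le_div_iff₀ hn₁pos hL0] at hkey
        nlinarith [mul_nonneg (mul_nonneg
            (show (0:ℝ) ≤ 1/2 - ∑ k ∈ univ \ Nmin b, xmin b / (L * b k) by linarith)
            htpos.le) hL0.le,
          mul_pos htpos (show (0:ℝ) < L - 2*((n:ℝ)-1) by linarith),
          mul_nonneg (show (0:ℝ) ≤ (n:ℝ)-1-((Nmin b).card:ℝ) by linarith) htpos.le,
          mul_pos (sub_pos.mpr hmt') hn₁pos]
      · -- unique minimum bidder: deviate upward
        have hone : (Nmin b).card = 1 :=
          le_antisymm (not_lt.mp hcard) (Finset.card_pos.mpr ⟨i, hi⟩)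
        obtain ⟨a, ha⟩ := Finset.card_eq_one.mp hone
        have hNi : Nmin b = {i} := by
          have hia := hi
          rw [ha, Finset.mem_singleton] at hia
          rw [ha, hia]
        have hset : univ \ Nmin b = univ.erase i := by
          rw [hNi]; ext k; simp [Finset.mem_erase, and_comm]
        have hsum_m : ∑ k ∈ univ \ Nmin b, xmin b / (L * b k)
            = xmin b * ∑ k ∈ univ.erase i, 1/(L * b k) := by
          rw [hset, Finset.mul_sum]
          exact Finset.sum_congr rfl fun k _ => (mul_one_div _ _).symm
        have hsM : xsec b ≤ (univ.erase i).inf' (erase_univ_nonempty hn i) b := by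
          apply Finset.le_inf'
          intro k hk
          apply xsec_le
          rw [hNi, Finset.mem_singleton]
          exact (Finset.mem_erase.mp hk).1
        have hspos : 0 < xsec b := lt_of_le_of_lt hm0 hms
        obtain ⟨x, hxm, hxt, hxc⟩ :
            ∃ x, xmin b < x ∧ x ≤ t i ∧ c * x ≤ xsec b := by
          refine ⟨min (t i) (xsec b / c), h', min_le_left _ _, ?_⟩
          have h1 : c * min (t i) (xsec b / c) ≤ c * (xsec b / c) :=
            mul_le_mul_of_nonneg_left (min_le_right _ _) hc0.le
          rwa [mul_div_cancel₀ _ (ne_of_gt hc0)] at h1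
        have hx0' : 0 ≤ x := le_trans hm0 hxm.le
        have hxpos : 0 < x := lt_of_le_of_lt hm0 hxm
        have hxs : x < xsec b := lt_of_lt_of_le (by nlinarith) hxc
        have hdown : ∀ k, k ≠ i → x < b k := by
          intro k hk
          refine lt_of_lt_of_le hxs (xsec_le ?_)
          rw [hNi, Finset.mem_singleton]
          exact hk
        have hc3 : c * x
            ≤ (univ.erase i).inf' (erase_univ_nonempty hn i) b :=
          le_trans hxc hsM
        have hdev := heq i x hx0'
        have hsum_x : ∑ k ∈ univ.erase i, x / (L * b k)
            = x * ∑ k ∈ univ.erase i, 1/(L * b k) := by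
          rw [Finset.mul_sum]
          exact Finset.sum_congr rfl fun k _ => (mul_one_div _ _).symm
        have hcost_dev : cost L c t (Function.update b i x) i
            = (1 - x * ∑ k ∈ univ.erase i, 1/(L * b k)) * t i := by
          rw [cost, sdown_alloc3 hn hdown hc3, Function.update_self,
            max_eq_right hxt, hsum_x]
        rw [hcost_cur, hcost_dev, max_eq_right hmt'.le, hsum_m, hone,
          Nat.cast_one, div_one] at hdev
        have hσpos : 0 < ∑ k ∈ univ.erase i, 1/(L * b k) := by
          apply Finset.sum_pos _ (erase_univ_nonempty hn i)
          intro k hk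
          have hbk : 0 < b k := by
            refine lt_of_lt_of_le hspos (xsec_le ?_)
            rw [hNi, Finset.mem_singleton]
            exact (Finset.mem_erase.mp hk).1
          exact one_div_pos.mpr (mul_pos hL0 hbk)
        nlinarith [mul_pos (mul_pos (sub_pos.mpr hxm) hσpos) htpos]
end

section
/- Let t be an n×m matrix of execution times with all entries strictly positive, where n ≥ 1 and m ≥ 1. If α is a fractional allocation attaining the minimum fractional makespan μ(t), then the workload is fully balanced among all machines: Σ_j α_{ij}·t_{ij} = μ(t) for every machine i. -/
open Finset

/-- `α` is a fractional allocation of `m` tasks to `n` machines: all fractions lie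
in `[0,1]` and each task is allocated entirely. -/
def IsFracAlloc {n m : ℕ} (α : Fin n → Fin m → ℝ) : Prop :=
  (∀ i j, 0 ≤ α i j ∧ α i j ≤ 1) ∧ ∀ j, ∑ i, α i j = 1

/-- The load of machine `i` under allocation `α` and execution times `t`. -/
noncomputable def load {n m : ℕ} (α t : Fin n → Fin m → ℝ) (i : Fin n) : ℝ :=
  ∑ j, α i j * t i j

/-- The fractional makespan of the allocation `α` for execution times `t`:
the maximum load over machines. -/
noncomputable def fracMakespan {n m : ℕ} (α t : Fin n → Fin m → ℝ) : ℝ :=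
  ⨆ i : Fin n, load α t i

/-- `μ t`: the minimum fractional makespan over all fractional allocations (the
value of the LP relaxation of the scheduling problem). -/
noncomputable def mu {n m : ℕ} (t : Fin n → Fin m → ℝ) : ℝ :=
  ⨅ α : {α : Fin n → Fin m → ℝ // IsFracAlloc α}, fracMakespan α.1 t

open Filter Topology

/-!
If an optimal allocation `α` left some machine `i` with load `L < μ`, then `μ > 0`, and moving
a small fraction `ε` of every task onto machine `i`, i.e. passing to `(1 - ε) • α + ε • eᵢ`
where `eᵢ` puts everything on `i`, scales every other load by `1 - ε` and changes the load of
`i` continuously in `ε`. For small `ε > 0` all loads are then below `μ`, which is impossible.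
-/

variable {n m : ℕ}

lemma convex_setOf_isFracAlloc : Convex ℝ {α : Fin n → Fin m → ℝ | IsFracAlloc α} := by
  rintro α ⟨hα01, hα⟩ β ⟨hβ01, hβ⟩ a b ha hb hab
  refine ⟨fun i j => ⟨?_, ?_⟩, fun j => ?_⟩
  · simp only [Pi.add_apply, Pi.smul_apply, smul_eq_mul]
    nlinarith [hα01 i j, hβ01 i j]
  · simp only [Pi.add_apply, Pi.smul_apply, smul_eq_mul]
    nlinarith [hα01 i j, hβ01 i j]
  · simp only [Pi.add_apply, Pi.smul_apply, smul_eq_mul, sum_add_distrib, ← mul_sum, hα, hβ]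
    linarith

lemma isFracAlloc_pi_single (i : Fin n) : IsFracAlloc (Pi.single i 1 : Fin n → Fin m → ℝ) := by
  refine ⟨fun i' j => ?_, fun j => ?_⟩
  · rcases eq_or_ne i' i with rfl | h <;> simp [*]
  · rw [← Finset.sum_apply, sum_pi_single']
    simp

lemma load_add (α β t : Fin n → Fin m → ℝ) (i : Fin n) :
    load (α + β) t i = load α t i + load β t i := by
  simp only [load, Pi.add_apply, add_mul, sum_add_distrib]

lemma load_smul (c : ℝ) (α t : Fin n → Fin m → ℝ) (i : Fin n) :
    load (c • α) t i = c * load α t i := by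
  simp only [load, Pi.smul_apply, smul_eq_mul, mul_sum, mul_assoc]

lemma load_pi_single_of_ne (t : Fin n → Fin m → ℝ) {i i' : Fin n} (h : i' ≠ i) :
    load (Pi.single i 1) t i' = 0 := by
  simp [load, h]

lemma load_nonneg {α t : Fin n → Fin m → ℝ} (hα : IsFracAlloc α) (ht : ∀ i j, 0 ≤ t i j)
    (i : Fin n) : 0 ≤ load α t i :=
  sum_nonneg fun j _ => mul_nonneg (hα.1 i j).1 (ht i j)

lemma load_le_fracMakespan (α t : Fin n → Fin m → ℝ) (i : Fin n) :
    load α t i ≤ fracMakespan α t :=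
  le_ciSup (Set.finite_range _).bddAbove i

lemma mu_le_fracMakespan {α t : Fin n → Fin m → ℝ} (ht : ∀ i j, 0 ≤ t i j)
    (hα : IsFracAlloc α) : mu t ≤ fracMakespan α t := by
  refine ciInf_le ⟨0, ?_⟩ (⟨α, hα⟩ : {α : Fin n → Fin m → ℝ // IsFracAlloc α})
  rintro _ ⟨β, rfl⟩
  exact Real.iSup_nonneg (load_nonneg β.2 ht)

lemma mu_lt_of_forall_load_lt [Nonempty (Fin n)] {α t : Fin n → Fin m → ℝ} {c : ℝ}
    (ht : ∀ i j, 0 ≤ t i j) (hα : IsFracAlloc α) (h : ∀ i, load α t i < c) : mu t < c := by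
  obtain ⟨i, hi⟩ := exists_eq_ciSup_of_finite (f := fun i => load α t i)
  calc mu t ≤ fracMakespan α t := mu_le_fracMakespan ht hα
    _ = load α t i := hi.symm
    _ < c := h i

lemma exists_isFracAlloc_forall_load_lt {α t : Fin n → Fin m → ℝ} {M : ℝ}
    (ht : ∀ i j, 0 ≤ t i j) (hα : IsFracAlloc α) (hM : ∀ i, load α t i ≤ M)
    {i : Fin n} (hi : load α t i < M) :
    ∃ β, IsFracAlloc β ∧ ∀ i', load β t i' < M := by
  set L := load α t i
  set T := load (Pi.single i 1) t i
  have hM0 : 0 < M := (load_nonneg hα ht i).trans_lt hi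
  have hL : Tendsto (fun ε : ℝ => (1 - ε) * L + ε * T) (𝓝[>] 0) (𝓝 L) :=
    ((by fun_prop : Continuous fun ε : ℝ => (1 - ε) * L + ε * T).tendsto' 0 L
      (by simp)).mono_left nhdsWithin_le_nhds
  obtain ⟨ε, hεL, hε⟩ :=
    ((hL.eventually_lt_const hi).and (Ioo_mem_nhdsGT zero_lt_one)).exists
  refine ⟨(1 - ε) • α + ε • Pi.single i 1,
    convex_setOf_isFracAlloc hα (isFracAlloc_pi_single i) (by linarith [hε.2]) hε.1.le
      (by ring), fun i' => ?_⟩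
  rw [load_add, load_smul, load_smul]
  rcases eq_or_ne i' i with rfl | hne
  · exact hεL
  · rw [load_pi_single_of_ne t hne, mul_zero, add_zero]
    calc (1 - ε) * load α t i' ≤ (1 - ε) * M :=
          mul_le_mul_of_nonneg_left (hM i') (by linarith [hε.2])
      _ < M := mul_lt_of_lt_one_left hM0 (by linarith [hε.1])

theorem optimal_fractional_allocation_balanced_general
    {n m : ℕ}
    (t : Fin n → Fin m → ℝ) (ht : ∀ i j, 0 < t i j)
    (α : Fin n → Fin m → ℝ) (hα : IsFracAlloc α)
    (hopt : fracMakespan α t = mu t) :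
    ∀ i : Fin n, load α t i = mu t := by
  intro i
  have : Nonempty (Fin n) := ⟨i⟩
  have ht' : ∀ i j, 0 ≤ t i j := fun i j => (ht i j).le
  have hle : ∀ i', load α t i' ≤ mu t := fun i' => hopt ▸ load_le_fracMakespan α t i'
  refine (hle i).antisymm (not_lt.1 fun hlt => ?_)
  obtain ⟨β, hβ, hβlt⟩ := exists_isFracAlloc_forall_load_lt ht' hα hle hlt
  exact (mu_lt_of_forall_load_lt ht' hβ hβlt).false

/-- For strictly positive execution times (`n, m ≥ 1`), any fractional allocation
attaining the minimum fractional makespan `μ t` is fully balanced: every machine's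
load equals `μ t`. -/
theorem optimal_fractional_allocation_balanced
    {n m : ℕ} (hn : 1 ≤ n) (hm : 1 ≤ m)
    (t : Fin n → Fin m → ℝ) (ht : ∀ i j, 0 < t i j)
    (α : Fin n → Fin m → ℝ) (hα : IsFracAlloc α)
    (hopt : fracMakespan α t = mu t) :
    ∀ i : Fin n, load α t i = mu t :=
  optimal_fractional_allocation_balanced_general t ht α hα hopt
end
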